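/- arXiv:1412.6398 — 5 statements merged into one kernel-verified Lean document; each statement's English description precedes it below -/
import Mathlib

section
/- Let L be a Lie algebra over ℂ, M a finite-dimensional complex L-module, and h an L-invariant Hermitian sesquilinear form on M that is nondegenerate on M. Suppose M is the internal direct sum of L-submodules V₁, …, V_l, each of which is irreducible and totally isotropic for h. Then for every index i there exists an index j ≠ i such that the restriction of h to the subspace V_i + V_j is nondegenerate. -/
/-!
Pick `a ≠ 0` in `V i`. By nondegeneracy `h a` does not vanish on `M = ⨆ k, V k`, so it is
nonzero on some `V j`, and `j ≠ i` because `V i` is isotropic. By invariance, the vectors of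
`V i` orthogonal to `V j` form a Lie submodule; it is proper because it misses `a`, hence zero
by irreducibility, and symmetrically (using hermitianity) for `V j` against `V i`. Since both
summands are isotropic, a vector of `V i + V j` orthogonal to `V i + V j` then has both
components zero.
-/

section Pairing

variable {R M : Type*} [CommRing R] [AddCommGroup M] [Module R M] {σ : R →+* R}
  (h : M →ₛₗ[σ] M →ₗ[R] R)

theorem exists_pairing_ne_zero_of_iSup_eq_top (hsep : h.SeparatingLeft) {ι : Type*}
    {V : ι → Submodule R M} (hV : ⨆ k, V k = ⊤) {a : M} (ha : a ≠ 0) :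
    ∃ k, ∃ b ∈ V k, h a b ≠ 0 := by
  by_contra! hvanish
  refine ha (hsep a fun w => ?_)
  have hker : ⨆ k, V k ≤ LinearMap.ker (h a) := iSup_le fun k b hb => hvanish k b hb
  exact hker (hV ▸ Submodule.mem_top)

theorem eq_zero_of_mem_sup_of_isotropic {A B : Submodule R M}
    (hA : ∀ a ∈ A, ∀ a' ∈ A, h a a' = 0) (hB : ∀ b ∈ B, ∀ b' ∈ B, h b b' = 0)
    (hAB : ∀ a ∈ A, (∀ b ∈ B, h a b = 0) → a = 0)
    (hBA : ∀ b ∈ B, (∀ a ∈ A, h b a = 0) → b = 0) :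
    ∀ v ∈ A ⊔ B, (∀ w ∈ A ⊔ B, h v w = 0) → v = 0 := by
  intro v hv hvw
  obtain ⟨a, ha, b, hb, rfl⟩ := Submodule.mem_sup.mp hv
  have ha0 : a = 0 := hAB a ha fun b' hb' => by
    simpa [hB b hb b' hb'] using hvw b' (Submodule.mem_sup_right hb')
  have hb0 : b = 0 := hBA b hb fun a' ha' => by
    simpa [hA a ha a' ha'] using hvw a' (Submodule.mem_sup_left ha')
  simp [ha0, hb0]

end Pairing

section LieOrthogonal

variable {R L M : Type*} [CommRing R] [LieRing L] [AddCommGroup M] [Module R M]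
  [LieRingModule L M] {σ : R →+* R} (h : M →ₛₗ[σ] M →ₗ[R] R)

def lieLeftOrthogonal (hInv : ∀ (x : L) (v w : M), h ⁅x, v⁆ w + h v ⁅x, w⁆ = 0)
    (B : LieSubmodule R L M) : LieSubmodule R L M where
  carrier := {v | ∀ b ∈ B, h v b = 0}
  add_mem' hv hw b hb := by simp [hv b hb, hw b hb]
  zero_mem' b _ := by simp
  smul_mem' c v hv b hb := by simp [hv b hb]
  lie_mem {x v} hv b hb := by
    simpa [hv _ (B.lie_mem hb)] using hInv x v b

theorem eq_zero_of_pairing_eq_zero_of_irreducible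
    (hInv : ∀ (x : L) (v w : M), h ⁅x, v⁆ w + h v ⁅x, w⁆ = 0) {A B : LieSubmodule R L M}
    (hA : ∀ W ≤ A, W = ⊥ ∨ W = A) (hAB : ∃ a ∈ A, ∃ b ∈ B, h a b ≠ 0) :
    ∀ a ∈ A, (∀ b ∈ B, h a b = 0) → a = 0 := by
  intro a ha hab
  rcases hA (A ⊓ lieLeftOrthogonal h hInv B) inf_le_left with hbot | htop
  · simpa [hbot] using (show a ∈ A ⊓ lieLeftOrthogonal h hInv B from ⟨ha, hab⟩)
  · obtain ⟨a', ha', b, hb, hab'⟩ := hAB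
    exact absurd ((htop.symm ▸ ha' : a' ∈ A ⊓ lieLeftOrthogonal h hInv B).2 b hb) hab'

end LieOrthogonal

theorem exists_partner_of_isotropic_decomposition_general
    {L : Type*} [LieRing L] [LieAlgebra ℂ L]
    {M : Type*} [AddCommGroup M] [Module ℂ M] [LieRingModule L M] [LieModule ℂ L M]
    (h : M →ₗ⋆[ℂ] M →ₗ[ℂ] ℂ)
    (hHerm : ∀ v w : M, h w v = (starRingEnd ℂ) (h v w))
    (hInv : ∀ (x : L) (v w : M), h ⁅x, v⁆ w + h v ⁅x, w⁆ = 0)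
    (hNondeg : ∀ v : M, (∀ w : M, h v w = 0) → v = 0)
    (l : ℕ) (V : Fin l → LieSubmodule ℂ L M)
    (hSup : (⨆ i, V i) = ⊤)
    (hIrr : ∀ i, V i ≠ ⊥ ∧ ∀ W ≤ V i, W = ⊥ ∨ W = V i)
    (hIso : ∀ i, ∀ v ∈ V i, ∀ w ∈ V i, h v w = 0) :
    ∀ i, ∃ j, j ≠ i ∧
      ∀ v ∈ V i ⊔ V j, (∀ w ∈ V i ⊔ V j, h v w = 0) → v = 0 := by
  intro i
  obtain ⟨a, ha, ha0⟩ : ∃ a ∈ V i, a ≠ 0 := by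
    simpa [LieSubmodule.eq_bot_iff] using (hIrr i).1
  have hSup' : ⨆ k, (V k : Submodule ℂ M) = ⊤ := by
    rw [← LieSubmodule.iSup_toSubmodule, hSup, LieSubmodule.top_toSubmodule]
  obtain ⟨j, b, hb, hab⟩ := exists_pairing_ne_zero_of_iSup_eq_top h hNondeg hSup' ha0
  have hji : j ≠ i := by
    rintro rfl
    exact hab (hIso j a ha b hb)
  have hba : h b a ≠ 0 := by
    rw [hHerm]
    simpa using hab
  refine ⟨j, hji, ?_⟩
  simp only [← LieSubmodule.mem_toSubmodule, LieSubmodule.sup_toSubmodule]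
  exact eq_zero_of_mem_sup_of_isotropic h (hIso i) (hIso j)
    (eq_zero_of_pairing_eq_zero_of_irreducible h hInv (hIrr i).2 ⟨a, ha, b, hb, hab⟩)
    (eq_zero_of_pairing_eq_zero_of_irreducible h hInv (hIrr j).2 ⟨b, hb, a, ha, hba⟩)

/-- Let `L` be a Lie algebra over `ℂ`, `M` a finite-dimensional complex
`L`-module, and `h` an `L`-invariant Hermitian sesquilinear form on `M` that is
nondegenerate on `M`. Suppose `M` is the internal direct sum of `L`-submodules
`V 0, …, V (l-1)`, each of which is irreducible and totally isotropic for `h`. Then for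
every index `i` there exists an index `j ≠ i` such that the restriction of `h` to the
subspace `V i + V j` is nondegenerate. -/
theorem exists_partner_of_isotropic_decomposition
    {L : Type*} [LieRing L] [LieAlgebra ℂ L]
    {M : Type*} [AddCommGroup M] [Module ℂ M] [LieRingModule L M] [LieModule ℂ L M]
    [FiniteDimensional ℂ M]
    (h : M →ₗ⋆[ℂ] M →ₗ[ℂ] ℂ)
    (hHerm : ∀ v w : M, h w v = (starRingEnd ℂ) (h v w))
    (hInv : ∀ (x : L) (v w : M), h ⁅x, v⁆ w + h v ⁅x, w⁆ = 0)
    (hNondeg : ∀ v : M, (∀ w : M, h v w = 0) → v = 0)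
    (l : ℕ) (V : Fin l → LieSubmodule ℂ L M)
    (hIndep : ∀ i, Disjoint (V i) (⨆ j ≠ i, V j))
    (hSup : (⨆ i, V i) = ⊤)
    (hIrr : ∀ i, V i ≠ ⊥ ∧ ∀ W ≤ V i, W = ⊥ ∨ W = V i)
    (hIso : ∀ i, ∀ v ∈ V i, ∀ w ∈ V i, h v w = 0) :
    ∀ i, ∃ j, j ≠ i ∧
      ∀ v ∈ V i ⊔ V j, (∀ w ∈ V i ⊔ V j, h v w = 0) → v = 0 :=
  exists_partner_of_isotropic_decomposition_general h hHerm hInv hNondeg l V hSup hIrr hIso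
end

section
/- Regard gl(2, ℂ) = M₂(ℂ) as a real Lie algebra with the commutator bracket. The map ρ : M₂(ℂ) → M₄(ℂ) sending X to the 2×2 block matrix [[Xᵃ, Xʰ], [Xʰ, Xᵃ]], where Xᵃ = (X − Xᴴ)/2 is the anti-Hermitian part and Xʰ = (X + Xᴴ)/2 is the Hermitian part of X, is an injective homomorphism of real Lie algebras; moreover every matrix ρ(X) satisfies ρ(X)ᴴ D + D ρ(X) = 0, where D = diag(1, 1, −1, −1), i.e., ρ takes values in the real Lie algebra u(2, 2) of matrices skew-adjoint with respect to the Hermitian form (u, v) ↦ uᴴ D v of signature (2, 2) on ℂ⁴. -/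
open Matrix

/-- The map `X ↦ [[Xᵃ, Xʰ], [Xʰ, Xᵃ]]` where `Xᵃ = (X − Xᴴ)/2` is the anti-Hermitian part
and `Xʰ = (X + Xᴴ)/2` is the Hermitian part of `X`. -/
noncomputable def rho (X : Matrix (Fin 2) (Fin 2) ℂ) :
    Matrix (Fin 2 ⊕ Fin 2) (Fin 2 ⊕ Fin 2) ℂ :=
  Matrix.fromBlocks
    ((1 / 2 : ℂ) • (X - Xᴴ)) ((1 / 2 : ℂ) • (X + Xᴴ))
    ((1 / 2 : ℂ) • (X + Xᴴ)) ((1 / 2 : ℂ) • (X - Xᴴ))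

/-- The Gram matrix `D = diag(1, 1, −1, −1)` of the standard Hermitian form of signature
`(2,2)` on `ℂ⁴`. -/
noncomputable def Dmat : Matrix (Fin 2 ⊕ Fin 2) (Fin 2 ⊕ Fin 2) ℂ :=
  Matrix.fromBlocks 1 0 0 (-1)

/-- The map `ρ : M₂(ℂ) → M₄(ℂ)`, `X ↦ [[Xᵃ, Xʰ], [Xʰ, Xᵃ]]`, is an
injective homomorphism of real Lie algebras, and every `ρ(X)` satisfies
`ρ(X)ᴴ D + D ρ(X) = 0` with `D = diag(1, 1, −1, −1)`, i.e. `ρ` takes values in `u(2,2)`. -/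
theorem rho_injective_realLieHom_into_u22 :
    Function.Injective rho ∧
    (∀ X Y : Matrix (Fin 2) (Fin 2) ℂ, rho (X + Y) = rho X + rho Y) ∧
    (∀ (r : ℝ) (X : Matrix (Fin 2) (Fin 2) ℂ), rho (r • X) = r • rho X) ∧
    (∀ X Y : Matrix (Fin 2) (Fin 2) ℂ, rho ⁅X, Y⁆ = ⁅rho X, rho Y⁆) ∧
    (∀ X : Matrix (Fin 2) (Fin 2) ℂ, (rho X)ᴴ * Dmat + Dmat * rho X = 0) := by
  refine ⟨?_, ?_, ?_, ?_, ?_⟩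
  · intro X Y h
    unfold rho at h
    rw [Matrix.fromBlocks_inj] at h
    obtain ⟨h1, h2, -, -⟩ := h
    have hx : X = (1 / 2 : ℂ) • (X - Xᴴ) + (1 / 2 : ℂ) • (X + Xᴴ) := by
      match_scalars <;> ring
    have hy : Y = (1 / 2 : ℂ) • (Y - Yᴴ) + (1 / 2 : ℂ) • (Y + Yᴴ) := by
      match_scalars <;> ring
    rw [hx, hy, h1, h2]
  · intro X Y
    simp only [rho, conjTranspose_add, Matrix.fromBlocks_add, Matrix.fromBlocks_inj]
    refine ⟨?_, ?_, ?_, ?_⟩ <;> module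
  · intro r X
    simp only [rho, conjTranspose_smul, star_trivial, Matrix.fromBlocks_smul,
      Matrix.fromBlocks_inj]
    refine ⟨?_, ?_, ?_, ?_⟩ <;> module
  · intro X Y
    simp only [rho, Ring.lie_def, Matrix.fromBlocks_multiply, sub_eq_add_neg,
      Matrix.fromBlocks_neg, Matrix.fromBlocks_add,
      conjTranspose_add, conjTranspose_neg, conjTranspose_mul, Matrix.fromBlocks_inj]
    refine ⟨?_, ?_, ?_, ?_⟩
    all_goals
      simp only [Matrix.smul_mul, Matrix.mul_smul, add_mul, mul_add,
        neg_mul, mul_neg, smul_add, smul_neg, smul_smul]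
      match_scalars <;> ring
  · intro X
    simp only [rho, Dmat, Matrix.fromBlocks_conjTranspose,
      Matrix.fromBlocks_multiply, Matrix.fromBlocks_add, conjTranspose_smul,
      conjTranspose_sub, conjTranspose_add, conjTranspose_conjTranspose, star_div₀, star_one, star_ofNat]
    rw [← Matrix.fromBlocks_zero, Matrix.fromBlocks_inj]
    refine ⟨?_, ?_, ?_, ?_⟩
    all_goals
      simp only [Matrix.mul_smul, Matrix.smul_mul, Matrix.mul_one,
        Matrix.one_mul, Matrix.mul_zero, Matrix.zero_mul, mul_neg, neg_mul,
        Matrix.mul_neg, Matrix.neg_mul, smul_neg]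
      match_scalars <;> ring
end

section
/- Let ρ : M₂(ℂ) → M₄(ℂ) be the real Lie algebra homomorphism ρ(X) = [[Xᵃ, Xʰ], [Xʰ, Xᵃ]] with Xᵃ = (X − Xᴴ)/2 and Xʰ = (X + Xᴴ)/2, and let h be the Hermitian form h(u, v) = uᴴ D v on ℂ⁴ with D = diag(1, 1, −1, −1). Then the subspaces W₊ = span{e₁ + e₃, e₂ + e₄} and W₋ = span{e₁ − e₃, e₂ − e₄} of ℂ⁴ are invariant under ρ(X) for every X ∈ M₂(ℂ), the form h vanishes identically on W₊ and on W₋, and every complex subspace of ℂ⁴ invariant under all ρ(X) other than {0} and ℂ⁴ equals W₊ or W₋. In particular, ℂ⁴ has no nonzero proper ρ(M₂(ℂ))-invariant subspace on which h is nondegenerate. -/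
open Matrix

/-- The standard basis vectors `e₁, e₂, e₃, e₄` of `ℂ⁴`. -/
noncomputable def e (i : Fin 2 ⊕ Fin 2) : (Fin 2 ⊕ Fin 2) → ℂ := Pi.single i 1

/-- `W₊ = span{e₁ + e₃, e₂ + e₄}`. -/
noncomputable def Wplus : Submodule ℂ ((Fin 2 ⊕ Fin 2) → ℂ) :=
  Submodule.span ℂ {e (Sum.inl 0) + e (Sum.inr 0), e (Sum.inl 1) + e (Sum.inr 1)}

/-- `W₋ = span{e₁ − e₃, e₂ − e₄}`. -/
noncomputable def Wminus : Submodule ℂ ((Fin 2 ⊕ Fin 2) → ℂ) :=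
  Submodule.span ℂ {e (Sum.inl 0) - e (Sum.inr 0), e (Sum.inl 1) - e (Sum.inr 1)}

/-!
Write `v = (a, a) + (b, -b)` along `ℂ⁴ = W₊ ⊕ W₋`; then `ρ(X)` acts as `X` on `W₊` and as `-Xᴴ` on
`W₋`. As `Xᴴ` is conjugate-linear in `X`, `ρ(X) - iρ(iX)` maps `v` to `2(Xa, Xa)` and
`ρ(X) + iρ(iX)` maps it to `-2(Xᴴb, -Xᴴb)`. Any nonzero vector of `ℂ²` is sent to any other by
some `X`, so an invariant subspace containing a vector with `a ≠ 0` contains `W₊`, and one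
containing a vector with `b ≠ 0` contains `W₋`; hence a nonzero proper invariant subspace is `W₊`
or `W₋`. Finally `D` swaps `(a, a)` and `(a, -a)`, which are orthogonal for the standard form, so
`h` vanishes on both.
-/

section Vectors

variable {ι R : Type*}

def plusVec [Semiring R] : (ι → R) →ₗ[R] (ι ⊕ ι → R) where
  toFun a := Sum.elim a a
  map_add' _ _ := by ext (i | i) <;> rfl
  map_smul' _ _ := by ext (i | i) <;> rfl

def minusVec [Ring R] : (ι → R) →ₗ[R] (ι ⊕ ι → R) where
  toFun a := Sum.elim a (-a)
  map_add' _ _ := by ext (i | i) <;> simp [add_comm]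
  map_smul' _ _ := by ext (i | i) <;> simp

@[simp]
lemma plusVec_apply [Semiring R] (a : ι → R) : plusVec a = Sum.elim a a := rfl

@[simp]
lemma minusVec_apply [Ring R] (a : ι → R) : minusVec a = Sum.elim a (-a) := rfl

lemma exists_plusVec_add_minusVec [Field R] [NeZero (2 : R)] (v : ι ⊕ ι → R) :
    ∃ a b, plusVec a + minusVec b = v := by
  refine ⟨(2 : R)⁻¹ • (v ∘ Sum.inl + v ∘ Sum.inr), (2 : R)⁻¹ • (v ∘ Sum.inl - v ∘ Sum.inr), ?_⟩
  ext (i | i) <;> simp <;> field_simp <;> ring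

lemma star_plusVec_dotProduct_minusVec [Fintype ι] [Ring R] [Star R] (a b : ι → R) :
    star (plusVec a) ⬝ᵥ minusVec b = 0 := by
  simp [dotProduct, Fintype.sum_sum_type]

lemma star_minusVec_dotProduct_plusVec [Fintype ι] [Ring R] [StarAddMonoid R] (a b : ι → R) :
    star (minusVec a) ⬝ᵥ plusVec b = 0 := by
  simp [dotProduct, Fintype.sum_sum_type]

end Vectors

lemma Matrix.exists_mulVec_eq {K m n : Type*} [Field K] [Fintype n] [DecidableEq n]
    {a : n → K} (ha : a ≠ 0) (w : m → K) : ∃ X : Matrix m n K, X *ᵥ a = w := by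
  obtain ⟨j, hj⟩ := Function.ne_iff.1 ha
  refine ⟨vecMulVec w (Pi.single j (a j)⁻¹), ?_⟩
  rw [vecMulVec_mulVec, single_dotProduct, inv_mul_cancel₀ hj]
  simp

lemma LinearMap.range_eq_span_pair {K M : Type*} [Field K] [AddCommGroup M] [Module K M]
    (f : (Fin 2 → K) →ₗ[K] M) :
    range f = Submodule.span K {f (Pi.single 0 1), f (Pi.single 1 1)} := by
  rw [range_eq_map, ← (Pi.basisFun K (Fin 2)).span_eq, Submodule.map_span, ← Set.range_comp]
  congr 1
  ext
  simp [Fin.exists_fin_two, eq_comm]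

lemma Wplus_eq_range : Wplus = LinearMap.range (plusVec : (Fin 2 → ℂ) →ₗ[ℂ] _) := by
  rw [LinearMap.range_eq_span_pair, Wplus]
  congr 3 <;> ext (i | i) <;> fin_cases i <;> simp [e]

lemma Wminus_eq_range : Wminus = LinearMap.range (minusVec : (Fin 2 → ℂ) →ₗ[ℂ] _) := by
  rw [LinearMap.range_eq_span_pair, Wminus]
  congr 3 <;> ext (i | i) <;> fin_cases i <;> simp [e]

lemma plusVec_mem_Wplus (a : Fin 2 → ℂ) : plusVec a ∈ Wplus :=
  Wplus_eq_range ▸ LinearMap.mem_range_self _ a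

lemma minusVec_mem_Wminus (b : Fin 2 → ℂ) : minusVec b ∈ Wminus :=
  Wminus_eq_range ▸ LinearMap.mem_range_self _ b

lemma Wplus_sup_Wminus : Wplus ⊔ Wminus = ⊤ := by
  refine Submodule.eq_top_iff'.2 fun v => ?_
  obtain ⟨a, b, rfl⟩ := exists_plusVec_add_minusVec v
  exact Submodule.add_mem_sup (plusVec_mem_Wplus a) (minusVec_mem_Wminus b)

lemma Dmat_mulVec_plusVec (a : Fin 2 → ℂ) : Dmat *ᵥ plusVec a = minusVec a := by
  simp only [Dmat, plusVec_apply, minusVec_apply, fromBlocks_mulVec, Sum.elim_comp_inl,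
    Sum.elim_comp_inr, one_mulVec, zero_mulVec, neg_mulVec, add_zero, zero_add]

lemma Dmat_mulVec_minusVec (b : Fin 2 → ℂ) : Dmat *ᵥ minusVec b = plusVec b := by
  simp only [Dmat, plusVec_apply, minusVec_apply, fromBlocks_mulVec, Sum.elim_comp_inl,
    Sum.elim_comp_inr, one_mulVec, zero_mulVec, neg_mulVec, mulVec_neg, neg_neg, neg_zero,
    add_zero, zero_add]

lemma rho_mulVec_plusVec (X : Matrix (Fin 2) (Fin 2) ℂ) (a : Fin 2 → ℂ) :
    rho X *ᵥ plusVec a = plusVec (X *ᵥ a) := by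
  simp only [rho, plusVec_apply, fromBlocks_mulVec, Sum.elim_comp_inl, Sum.elim_comp_inr,
    smul_mulVec, sub_mulVec, add_mulVec]
  congr 1 <;> module

lemma rho_mulVec_minusVec (X : Matrix (Fin 2) (Fin 2) ℂ) (b : Fin 2 → ℂ) :
    rho X *ᵥ minusVec b = minusVec (-(Xᴴ *ᵥ b)) := by
  simp only [rho, minusVec_apply, fromBlocks_mulVec, Sum.elim_comp_inl, Sum.elim_comp_inr,
    smul_mulVec, sub_mulVec, add_mulVec, mulVec_neg, neg_neg]
  congr 1 <;> module

section Separation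

open Complex

variable (X : Matrix (Fin 2) (Fin 2) ℂ) (a b : Fin 2 → ℂ)

lemma rho_mulVec_sub_I_smul_rho_mulVec :
    rho X *ᵥ (plusVec a + minusVec b) - I • rho (I • X) *ᵥ (plusVec a + minusVec b)
      = (2 : ℂ) • plusVec (X *ᵥ a) := by
  simp only [mulVec_add, rho_mulVec_plusVec, rho_mulVec_minusVec, conjTranspose_smul,
    smul_mulVec, map_smul, map_neg, star_def, conj_I, smul_add, smul_neg, smul_smul, mul_neg,
    I_mul_I]
  module

lemma rho_mulVec_add_I_smul_rho_mulVec :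
    rho X *ᵥ (plusVec a + minusVec b) + I • rho (I • X) *ᵥ (plusVec a + minusVec b)
      = (-2 : ℂ) • minusVec (Xᴴ *ᵥ b) := by
  simp only [mulVec_add, rho_mulVec_plusVec, rho_mulVec_minusVec, conjTranspose_smul,
    smul_mulVec, map_smul, map_neg, star_def, conj_I, smul_add, smul_neg, smul_smul, mul_neg,
    I_mul_I]
  module

end Separation

def RhoInvariant (V : Submodule ℂ (Fin 2 ⊕ Fin 2 → ℂ)) : Prop :=
  ∀ X : Matrix (Fin 2) (Fin 2) ℂ, ∀ v ∈ V, rho X *ᵥ v ∈ V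

lemma rhoInvariant_Wplus : RhoInvariant Wplus := by
  rw [RhoInvariant, Wplus_eq_range]
  rintro X _ ⟨a, rfl⟩
  exact rho_mulVec_plusVec X a ▸ LinearMap.mem_range_self _ _

lemma rhoInvariant_Wminus : RhoInvariant Wminus := by
  rw [RhoInvariant, Wminus_eq_range]
  rintro X _ ⟨b, rfl⟩
  exact rho_mulVec_minusVec X b ▸ LinearMap.mem_range_self _ _

lemma isotropic_Wplus : ∀ v ∈ Wplus, ∀ w ∈ Wplus, star v ⬝ᵥ Dmat *ᵥ w = 0 := by
  rw [Wplus_eq_range]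
  rintro _ ⟨a, rfl⟩ _ ⟨b, rfl⟩
  rw [Dmat_mulVec_plusVec, star_plusVec_dotProduct_minusVec]

lemma isotropic_Wminus : ∀ v ∈ Wminus, ∀ w ∈ Wminus, star v ⬝ᵥ Dmat *ᵥ w = 0 := by
  rw [Wminus_eq_range]
  rintro _ ⟨a, rfl⟩ _ ⟨b, rfl⟩
  rw [Dmat_mulVec_minusVec, star_minusVec_dotProduct_plusVec]

namespace RhoInvariant

variable {V : Submodule ℂ (Fin 2 ⊕ Fin 2 → ℂ)}

lemma Wplus_le (hV : RhoInvariant V) {a b : Fin 2 → ℂ} (hv : plusVec a + minusVec b ∈ V)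
    (ha : a ≠ 0) : Wplus ≤ V := by
  rw [Wplus_eq_range]
  rintro _ ⟨w, rfl⟩
  obtain ⟨X, rfl⟩ := exists_mulVec_eq ha w
  have h := V.sub_mem (hV X _ hv) (V.smul_mem Complex.I (hV (Complex.I • X) _ hv))
  rw [rho_mulVec_sub_I_smul_rho_mulVec] at h
  exact (V.smul_mem_iff two_ne_zero).1 h

lemma Wminus_le (hV : RhoInvariant V) {a b : Fin 2 → ℂ} (hv : plusVec a + minusVec b ∈ V)
    (hb : b ≠ 0) : Wminus ≤ V := by
  rw [Wminus_eq_range]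
  rintro _ ⟨w, rfl⟩
  obtain ⟨X, hX⟩ := exists_mulVec_eq hb w
  have h := V.add_mem (hV Xᴴ _ hv) (V.smul_mem Complex.I (hV (Complex.I • Xᴴ) _ hv))
  rw [rho_mulVec_add_I_smul_rho_mulVec, conjTranspose_conjTranspose, hX] at h
  exact (V.smul_mem_iff (by norm_num)).1 h

lemma le_Wplus (hV : RhoInvariant V) (h : ¬ Wminus ≤ V) : V ≤ Wplus := by
  intro v hv
  obtain ⟨a, b, rfl⟩ := exists_plusVec_add_minusVec v
  obtain rfl : b = 0 := by_contra fun hb => h (hV.Wminus_le hv hb)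
  simpa using plusVec_mem_Wplus a

lemma le_Wminus (hV : RhoInvariant V) (h : ¬ Wplus ≤ V) : V ≤ Wminus := by
  intro v hv
  obtain ⟨a, b, rfl⟩ := exists_plusVec_add_minusVec v
  obtain rfl : a = 0 := by_contra fun ha => h (hV.Wplus_le hv ha)
  simpa using minusVec_mem_Wminus b

lemma Wplus_le_or_Wminus_le (hV : RhoInvariant V) (hbot : V ≠ ⊥) :
    Wplus ≤ V ∨ Wminus ≤ V := by
  obtain ⟨v, hv, hv0⟩ := (Submodule.ne_bot_iff V).1 hbot
  obtain ⟨a, b, rfl⟩ := exists_plusVec_add_minusVec v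
  by_cases ha : a = 0
  · refine Or.inr (hV.Wminus_le hv ?_)
    rintro rfl
    simp [ha] at hv0
  · exact Or.inl (hV.Wplus_le hv ha)

lemma eq_Wplus_or_eq_Wminus (hV : RhoInvariant V) (hbot : V ≠ ⊥) (htop : V ≠ ⊤) :
    V = Wplus ∨ V = Wminus := by
  have hboth : ¬ (Wplus ≤ V ∧ Wminus ≤ V) := fun h =>
    htop (top_le_iff.1 (Wplus_sup_Wminus ▸ sup_le h.1 h.2))
  rcases hV.Wplus_le_or_Wminus_le hbot with h | h
  · exact Or.inl ((hV.le_Wplus fun h' => hboth ⟨h, h'⟩).antisymm h)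
  · exact Or.inr ((hV.le_Wminus fun h' => hboth ⟨h', h⟩).antisymm h)

end RhoInvariant

/-- The subspaces `W₊` and `W₋` of `ℂ⁴` are invariant under `ρ(X)` for all
`X ∈ M₂(ℂ)`; the Hermitian form `h(u,v) = uᴴ D v` (with `D = diag(1,1,−1,−1)`) vanishes
identically on `W₊` and on `W₋`; every `ρ(M₂(ℂ))`-invariant subspace other than `{0}` and
`ℂ⁴` equals `W₊` or `W₋`; in particular `ℂ⁴` has no nonzero proper invariant subspace on
which `h` is nondegenerate. -/
theorem rho_invariant_subspaces :
    (∀ X : Matrix (Fin 2) (Fin 2) ℂ, ∀ v ∈ Wplus, (rho X).mulVec v ∈ Wplus) ∧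
    (∀ X : Matrix (Fin 2) (Fin 2) ℂ, ∀ v ∈ Wminus, (rho X).mulVec v ∈ Wminus) ∧
    (∀ v ∈ Wplus, ∀ w ∈ Wplus, dotProduct (star v) (Dmat.mulVec w) = 0) ∧
    (∀ v ∈ Wminus, ∀ w ∈ Wminus, dotProduct (star v) (Dmat.mulVec w) = 0) ∧
    (∀ V : Submodule ℂ ((Fin 2 ⊕ Fin 2) → ℂ),
      (∀ X : Matrix (Fin 2) (Fin 2) ℂ, ∀ v ∈ V, (rho X).mulVec v ∈ V) →
      V ≠ ⊥ → V ≠ ⊤ → V = Wplus ∨ V = Wminus) ∧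
    (∀ V : Submodule ℂ ((Fin 2 ⊕ Fin 2) → ℂ),
      (∀ X : Matrix (Fin 2) (Fin 2) ℂ, ∀ v ∈ V, (rho X).mulVec v ∈ V) →
      V ≠ ⊥ → V ≠ ⊤ →
      ¬ (∀ v ∈ V, (∀ w ∈ V, dotProduct (star v) (Dmat.mulVec w) = 0) → v = 0)) := by
  refine ⟨rhoInvariant_Wplus, rhoInvariant_Wminus, isotropic_Wplus, isotropic_Wminus,
    fun V hV => RhoInvariant.eq_Wplus_or_eq_Wminus hV, fun V hV hbot htop hnondeg => ?_⟩
  obtain ⟨v, hv, hv0⟩ := (Submodule.ne_bot_iff V).1 hbot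
  have hiso : ∀ w ∈ V, star v ⬝ᵥ Dmat *ᵥ w = 0 := by
    rcases RhoInvariant.eq_Wplus_or_eq_Wminus hV hbot htop with rfl | rfl
    exacts [isotropic_Wplus v hv, isotropic_Wminus v hv]
  exact hv0 (hnondeg v hv hiso)
end

section
/- Let L₁ and L₂ be Lie algebras over ℂ, M₁ a finite-dimensional complex L₁-module, and M₂ a finite-dimensional complex L₂-module. Endow M₁ ⊗ M₂ with the L₁ × L₂-module structure determined by (x₁, x₂) • (m ⊗ n) = (⁅x₁, m⁆) ⊗ n + m ⊗ (⁅x₂, n⁆). If M₁ is the internal direct sum of irreducible L₁-submodules W₁, …, W_{n₁} and M₂ is the internal direct sum of irreducible L₂-submodules U₁, …, U_{n₂}, then M₁ ⊗ M₂ is the internal direct sum of the subspaces W_j ⊗ U_l (the images of the W_j ⊗ U_l inside M₁ ⊗ M₂), each W_j ⊗ U_l is an L₁ × L₂-submodule, and each W_j ⊗ U_l is irreducible as an L₁ × L₂-module. -/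
/-!
By Burnside's theorem, the associative algebra generated by an irreducible finite-dimensional
representation over an algebraically closed field is the full endomorphism algebra. Hence the
operators `x₁ ⊗ 1` and `1 ⊗ x₂` through which `L₁ × L₂` acts on `W ⊗ U` generate
`End W ⊗ End U = End (W ⊗ U)`, and a nonzero invariant subspace of `W ⊗ U` is all of it.
The decomposition of `M₁ ⊗ M₂` is direct because the projections `π_j ⊗ σ_l` built from the
decompositions of `M₁` and `M₂` separate the summands `W_j ⊗ U_l`.
-/

open TensorProduct

/-- The product of two Lie rings, with componentwise bracket. -/
instance prodLieRing {L₁ L₂ : Type*} [LieRing L₁] [LieRing L₂] : LieRing (L₁ × L₂) :=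
  { (inferInstance : AddCommGroup (L₁ × L₂)) with
    bracket := fun x y => (⁅x.1, y.1⁆, ⁅x.2, y.2⁆)
    add_lie := fun x y z => by
      show (⁅x.1 + y.1, z.1⁆, ⁅x.2 + y.2, z.2⁆)
          = (⁅x.1, z.1⁆ + ⁅y.1, z.1⁆, ⁅x.2, z.2⁆ + ⁅y.2, z.2⁆)
      rw [add_lie, add_lie]
    lie_add := fun x y z => by
      show (⁅x.1, y.1 + z.1⁆, ⁅x.2, y.2 + z.2⁆)
          = (⁅x.1, y.1⁆ + ⁅x.1, z.1⁆, ⁅x.2, y.2⁆ + ⁅x.2, z.2⁆)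
      rw [lie_add, lie_add]
    lie_self := fun x => by
      show (⁅x.1, x.1⁆, ⁅x.2, x.2⁆) = (0, 0)
      rw [lie_self, lie_self]
    leibniz_lie := fun x y z => by
      show (⁅x.1, ⁅y.1, z.1⁆⁆, ⁅x.2, ⁅y.2, z.2⁆⁆)
          = (⁅⁅x.1, y.1⁆, z.1⁆ + ⁅y.1, ⁅x.1, z.1⁆⁆, ⁅⁅x.2, y.2⁆, z.2⁆ + ⁅y.2, ⁅x.2, z.2⁆⁆)
      exact Prod.ext (leibniz_lie x.1 y.1 z.1) (leibniz_lie x.2 y.2 z.2) }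

/-- The product of two complex Lie algebras, with componentwise bracket. -/
instance prodLieAlgebra {L₁ L₂ : Type*} [LieRing L₁] [LieAlgebra ℂ L₁]
    [LieRing L₂] [LieAlgebra ℂ L₂] : LieAlgebra ℂ (L₁ × L₂) :=
  { (inferInstance : Module ℂ (L₁ × L₂)) with
    lie_smul := fun t x y => by
      show (⁅x.1, t • y.1⁆, ⁅x.2, t • y.2⁆) = (t • ⁅x.1, y.1⁆, t • ⁅x.2, y.2⁆)
      rw [lie_smul, lie_smul] }

open Module LinearMap

theorem isAtom_iff_ne_bot_and_forall_le {α : Type*} [PartialOrder α] [OrderBot α] {a : α} :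
    IsAtom a ↔ a ≠ ⊥ ∧ ∀ b ≤ a, b = ⊥ ∨ b = a :=
  ⟨fun h => ⟨h.1, fun _ => h.le_iff.mp⟩,
    fun h => ⟨h.1, fun b hb => (h.2 b hb.le).resolve_right hb.ne⟩⟩

def Submodule.stabilizerAlgebra {R M : Type*} [CommSemiring R] [AddCommMonoid M] [Module R M]
    (p : Submodule R M) : Subalgebra R (End R M) where
  carrier := {f | ∀ v ∈ p, f v ∈ p}
  mul_mem' hf hg v hv := hf _ (hg v hv)
  add_mem' hf hg v hv := p.add_mem (hf v hv) (hg v hv)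
  algebraMap_mem' r _ hv := p.smul_mem r hv

theorem Subalgebra.isSimpleModule_of_forall_le_stabilizerAlgebra {R M : Type*} [CommRing R]
    [AddCommGroup M] [Module R M] [Nontrivial M]
    (A : Subalgebra R (End R M))
    (hA : ∀ p : Submodule R M, A ≤ p.stabilizerAlgebra → p = ⊥ ∨ p = ⊤) :
    IsSimpleModule A M := by
  refine { eq_bot_or_eq_top := fun q => ?_ }
  simpa using hA (q.restrictScalars R) fun a ha v hv => q.smul_mem ⟨a, ha⟩ hv

section VectorSpace

variable {K V : Type*} [Field K] [AddCommGroup V] [Module K V]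

theorem Submodule.eq_bot_or_eq_top_of_stabilizerAlgebra_eq_top {p : Submodule K V}
    (hp : p.stabilizerAlgebra = ⊤) : p = ⊥ ∨ p = ⊤ := by
  refine or_iff_not_imp_left.mpr fun hne => eq_top_iff.mpr fun w _ => ?_
  obtain ⟨v, hv, hv0⟩ := p.ne_bot_iff.mp hne
  have : Nontrivial V := ⟨⟨v, 0, hv0⟩⟩
  obtain ⟨f, rfl⟩ :=
    (isSimpleModule_iff_toSpanSingleton_surjective (R := End K V)).mp inferInstance |>.2 v hv0 w
  exact (hp ▸ Algebra.mem_top : f ∈ p.stabilizerAlgebra) v hv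

/-- Burnside's theorem. -/
theorem Subalgebra.eq_top_of_forall_le_stabilizerAlgebra [IsAlgClosed K] [FiniteDimensional K V]
    [Nontrivial V] (A : Subalgebra K (End K V))
    (hA : ∀ p : Submodule K V, A ≤ p.stabilizerAlgebra → p = ⊥ ∨ p = ⊤) : A = ⊤ := by
  classical
  have := A.isSimpleModule_of_forall_le_stabilizerAlgebra hA
  have : FiniteDimensional K (End A V) := .of_injective (restrictScalarsₗ K A V V K)
    fun _ _ h => LinearMap.ext fun v => LinearMap.congr_fun h v
  have : IsDomain (End A V) := @DivisionRing.isDomain _ Module.End.instDivisionRing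
  -- Schur's lemma: the commutant of `A` consists of scalars, so it is enough to apply the
  -- Jacobson density theorem.
  have hscalar : Function.Surjective (algebraMap K (End A V)) :=
    IsAlgClosed.algebraMap_bijective_of_isIntegral.2
  have : Module.Finite (End A V) V := .of_restrictScalars_finite K _ V
  refine eq_top_iff.mpr fun f _ => ?_
  let F : End (End A V) V :=
    { toFun := f
      map_add' := f.map_add
      map_smul' := fun g v => by
        obtain ⟨c, rfl⟩ := hscalar g
        exact f.map_smul c v }
  obtain ⟨a, ha⟩ := Module.Finite.toModuleEnd_moduleEnd_surjective F
  convert a.2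
  exact LinearMap.ext fun v => (LinearMap.congr_fun ha v).symm

theorem TensorProduct.adjoin_rTensor_image_union_lTensor_image_eq_top {W : Type*}
    [AddCommGroup W] [Module K W] [FiniteDimensional K V] [FiniteDimensional K W]
    {s : Set (End K V)} {t : Set (End K W)}
    (hs : Algebra.adjoin K s = ⊤) (ht : Algebra.adjoin K t = ⊤) :
    Algebra.adjoin K (rTensor W '' s ∪ lTensor V '' t) = ⊤ := by
  set B := Algebra.adjoin K (rTensor W '' s ∪ lTensor V '' t)
  have hr (a : End K V) : rTensor W a ∈ B := by
    have : rTensor W a ∈ (Algebra.adjoin K s).map (End.rTensorAlgHom K V W) := by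
      rw [hs]; exact ⟨a, Algebra.mem_top, rfl⟩
    rw [AlgHom.map_adjoin] at this
    exact Algebra.adjoin_mono Set.subset_union_left this
  have hl (b : End K W) : lTensor V b ∈ B := by
    have : lTensor V b ∈ (Algebra.adjoin K t).map (End.lTensorAlgHom K W V) := by
      rw [ht]; exact ⟨b, Algebra.mem_top, rfl⟩
    rw [AlgHom.map_adjoin] at this
    exact Algebra.adjoin_mono Set.subset_union_right this
  refine eq_top_iff.mpr fun f _ => ?_
  rw [← (homTensorHomEquiv K V W V W).apply_symm_apply f]
  induction (homTensorHomEquiv K V W V W).symm f using TensorProduct.induction_on with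
  | zero => simp
  | tmul a b =>
    rw [homTensorHomEquiv_apply, homTensorHomMap_apply, ← rTensor_comp_lTensor]
    exact B.mul_mem (hr a) (hl b)
  | add θ₁ θ₂ h₁ h₂ => exact map_add (homTensorHomEquiv K V W V W) θ₁ θ₂ ▸ B.add_mem h₁ h₂

end VectorSpace

section DirectSum

variable {R M N ι κ : Type*}

theorem iSupIndep_of_forall_exists_projection [Semiring R] [AddCommMonoid M] [Module R M]
    {p : ι → Submodule R M}
    (h : ∀ i, ∃ π : M →ₗ[R] M, (∀ x ∈ p i, π x = x) ∧ ∀ j ≠ i, p j ≤ ker π) :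
    iSupIndep p := by
  intro i
  obtain ⟨π, hid, hker⟩ := h i
  refine Submodule.disjoint_def.mpr fun x hx hx' => ?_
  rw [← hid x hx]
  exact (iSup₂_le hker : _ ≤ ker π) hx'

theorem DirectSum.IsInternal.exists_projection [Semiring R] [AddCommMonoid M] [Module R M]
    [DecidableEq ι] {p : ι → Submodule R M} (hp : IsInternal p) (i : ι) :
    ∃ π : M →ₗ[R] M, (∀ x ∈ p i, π x = x) ∧ ∀ j ≠ i, p j ≤ ker π := by
  let _ := hp.chooseDecomposition
  refine ⟨(p i).subtype ∘ₗ component R ι _ i ∘ₗ (decomposeLinearEquiv p).toLinearMap,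
    fun x hx => ?_, fun j hj x hx => ?_⟩
  · simp [decomposeLinearEquiv_apply, ← apply_eq_component, decompose_of_mem_same p hx]
  · simp [decomposeLinearEquiv_apply, ← apply_eq_component, decompose_of_mem_ne p hx hj]

variable [CommRing R] [AddCommGroup M] [Module R M] [AddCommGroup N] [Module R N]

theorem DirectSum.IsInternal.iSupIndep_map₂_mk [DecidableEq ι] [DecidableEq κ]
    {W : ι → Submodule R M} {U : κ → Submodule R N} (hW : IsInternal W) (hU : IsInternal U) :
    iSupIndep fun p : ι × κ => Submodule.map₂ (TensorProduct.mk R M N) (W p.1) (U p.2) := by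
  refine iSupIndep_of_forall_exists_projection fun ⟨i, k⟩ => ?_
  obtain ⟨π, hπ, hπ0⟩ := hW.exists_projection i
  obtain ⟨σ, hσ, hσ0⟩ := hU.exists_projection k
  refine ⟨TensorProduct.map π σ, fun x hx => ?_,
    fun ⟨j, l⟩ hjl => Submodule.map₂_le.mpr fun m hm n hn => ?_⟩
  · have : Submodule.map₂ (TensorProduct.mk R M N) (W i) (U k) ≤
        eqLocus (TensorProduct.map π σ) LinearMap.id :=
      Submodule.map₂_le.mpr fun m hm n hn => by simp [hπ m hm, hσ n hn]
    exact this hx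
  · by_cases hij : j = i
    · have hkl : l ≠ k := fun hkl => hjl (by rw [hij, hkl])
      simp [mem_ker.mp (hσ0 l hkl hn)]
    · simp [mem_ker.mp (hπ0 j hij hm)]

theorem Submodule.iSup_map₂_mk_eq_top {W : ι → Submodule R M} {U : κ → Submodule R N}
    (hW : ⨆ i, W i = ⊤) (hU : ⨆ k, U k = ⊤) :
    ⨆ p : ι × κ, map₂ (TensorProduct.mk R M N) (W p.1) (U p.2) = ⊤ := by
  simp_rw [iSup_prod, ← map₂_iSup_right, ← map₂_iSup_left, hW, hU, map₂_mk_top_top_eq_top]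

end DirectSum

theorem LieSubmodule.isInternal_toSubmodule {R L M ι : Type*} [CommRing R] [LieRing L]
    [AddCommGroup M] [Module R M] [LieRingModule L M] [DecidableEq ι]
    {N : ι → LieSubmodule R L M} (hind : iSupIndep N) (hsup : ⨆ i, N i = ⊤) :
    DirectSum.IsInternal fun i => (N i : Submodule R M) :=
  DirectSum.isInternal_submodule_of_iSupIndep_of_iSup_eq_top (iSupIndep_toSubmodule.mpr hind)
    (by rw [← iSup_toSubmodule, hsup, top_toSubmodule])

section Lie

variable {K : Type*} [Field K]

theorem LieSubmodule.adjoin_range_toEnd_eq_top_of_isAtom {L M : Type*} [LieRing L]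
    [LieAlgebra K L] [AddCommGroup M] [Module K M] [LieRingModule L M] [LieModule K L M]
    [IsAlgClosed K] [FiniteDimensional K M] {W : LieSubmodule K L M} (hW : IsAtom W) :
    Algebra.adjoin K (Set.range (LieModule.toEnd K L W)) = ⊤ := by
  have : Nontrivial W := (nontrivial_iff_ne_bot K L M).mpr hW.1
  refine Subalgebra.eq_top_of_forall_le_stabilizerAlgebra _ fun p hp => ?_
  let N : LieSubmodule K L W :=
    { p with lie_mem := fun hm => hp (Algebra.subset_adjoin ⟨_, rfl⟩) _ hm }
  have hinj := map_injective_of_injective (f := W.incl) Subtype.coe_injective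
  rcases hW.le_iff.mp (map_incl_le : N.map W.incl ≤ W) with h | h
  · exact .inl <| (toSubmodule_eq_bot N).mpr <| hinj <| by rw [h, map_bot]
  · exact .inr <| (toSubmodule_eq_top N).mpr <| hinj <| by rw [h, map_incl_top]

variable {L₁ L₂ M₁ M₂ : Type*} [LieRing L₁] [LieAlgebra K L₁] [LieRing L₂] [LieAlgebra K L₂]
  [AddCommGroup M₁] [Module K M₁] [LieRingModule L₁ M₁] [LieModule K L₁ M₁]
  [AddCommGroup M₂] [Module K M₂] [LieRingModule L₂ M₂] [LieModule K L₂ M₂]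
  [LieRingModule (L₁ × L₂) (M₁ ⊗[K] M₂)]

theorem LieSubmodule.lie_mapIncl
    (haction : ∀ (x₁ : L₁) (x₂ : L₂) (m : M₁) (n : M₂),
      ⁅((x₁, x₂) : L₁ × L₂), m ⊗ₜ[K] n⁆ = ⁅x₁, m⁆ ⊗ₜ[K] n + m ⊗ₜ[K] ⁅x₂, n⁆)
    (W : LieSubmodule K L₁ M₁) (U : LieSubmodule K L₂ M₂) (x : L₁ × L₂) (s : W ⊗[K] U) :
    ⁅x, mapIncl (W : Submodule K M₁) (U : Submodule K M₂) s⁆ =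
      mapIncl (W : Submodule K M₁) (U : Submodule K M₂)
        (rTensor U (LieModule.toEnd K L₁ W x.1) s + lTensor W (LieModule.toEnd K L₂ U x.2) s) := by
  induction s using TensorProduct.induction_on with
  | zero => simp
  | tmul w u => simpa [mapIncl] using haction x.1 x.2 w u
  | add s₁ s₂ h₁ h₂ => simp only [map_add, lie_add, h₁, h₂]; abel

def LieSubmodule.boxtimes
    (haction : ∀ (x₁ : L₁) (x₂ : L₂) (m : M₁) (n : M₂),
      ⁅((x₁, x₂) : L₁ × L₂), m ⊗ₜ[K] n⁆ = ⁅x₁, m⁆ ⊗ₜ[K] n + m ⊗ₜ[K] ⁅x₂, n⁆)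
    (W : LieSubmodule K L₁ M₁) (U : LieSubmodule K L₂ M₂) :
    LieSubmodule K (L₁ × L₂) (M₁ ⊗[K] M₂) where
  toSubmodule := Submodule.map₂ (TensorProduct.mk K M₁ M₂) W U
  lie_mem {x m} hm := by
    rw [← range_mapIncl] at hm ⊢
    obtain ⟨s, rfl⟩ := hm
    exact ⟨_, (lie_mapIncl haction W U x s).symm⟩

theorem LieSubmodule.boxtimes_toSubmodule
    (haction : ∀ (x₁ : L₁) (x₂ : L₂) (m : M₁) (n : M₂),
      ⁅((x₁, x₂) : L₁ × L₂), m ⊗ₜ[K] n⁆ = ⁅x₁, m⁆ ⊗ₜ[K] n + m ⊗ₜ[K] ⁅x₂, n⁆)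
    (W : LieSubmodule K L₁ M₁) (U : LieSubmodule K L₂ M₂) :
    (boxtimes haction W U : Submodule K (M₁ ⊗[K] M₂)) =
      Submodule.map₂ (TensorProduct.mk K M₁ M₂) W U :=
  rfl

theorem LieSubmodule.isAtom_boxtimes [IsAlgClosed K] [FiniteDimensional K M₁]
    [FiniteDimensional K M₂]
    (haction : ∀ (x₁ : L₁) (x₂ : L₂) (m : M₁) (n : M₂),
      ⁅((x₁, x₂) : L₁ × L₂), m ⊗ₜ[K] n⁆ = ⁅x₁, m⁆ ⊗ₜ[K] n + m ⊗ₜ[K] ⁅x₂, n⁆)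
    {W : LieSubmodule K L₁ M₁} {U : LieSubmodule K L₂ M₂} (hW : IsAtom W) (hU : IsAtom U) :
    IsAtom (boxtimes haction W U) := by
  set ι := mapIncl (W : Submodule K M₁) (U : Submodule K M₂)
  have hrange : range ι = (boxtimes haction W U : Submodule K (M₁ ⊗[K] M₂)) :=
    range_mapIncl _ _
  have : Nontrivial W := (nontrivial_iff_ne_bot K L₁ M₁).mpr hW.1
  have : Nontrivial U := (nontrivial_iff_ne_bot K L₂ M₂).mpr hU.1
  refine ⟨fun h => ?_, fun T hT => ?_⟩
  · refine ne_zero_of_injective (f := ι)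
      (Module.Flat.tensorProduct_mapIncl_injective_of_right _ _) (range_eq_bot.mp ?_)
    rw [hrange, h, bot_toSubmodule]
  have hstab : ((T : Submodule K (M₁ ⊗[K] M₂)).comap ι).stabilizerAlgebra = ⊤ := by
    refine eq_top_iff.mpr <| (TensorProduct.adjoin_rTensor_image_union_lTensor_image_eq_top
      (adjoin_range_toEnd_eq_top_of_isAtom hW) (adjoin_range_toEnd_eq_top_of_isAtom hU)).ge.trans
      (Algebra.adjoin_le ?_)
    rintro _ (⟨_, ⟨x, rfl⟩, rfl⟩ | ⟨_, ⟨y, rfl⟩, rfl⟩) s (hs : ι s ∈ T)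
    · simpa [ι, lie_mapIncl haction] using T.lie_mem (x := ((x, 0) : L₁ × L₂)) hs
    · simpa [ι, lie_mapIncl haction] using T.lie_mem (x := ((0, y) : L₁ × L₂)) hs
  rcases Submodule.eq_bot_or_eq_top_of_stabilizerAlgebra_eq_top hstab with h | h
  · have hTι : (T : Submodule K (M₁ ⊗[K] M₂)) ≤ range ι := hrange ▸ hT.le
    rw [← toSubmodule_eq_bot, ← Submodule.map_comap_eq_self hTι, h, Submodule.map_bot]
  · refine absurd ?_ hT.not_ge
    rw [← toSubmodule_le_toSubmodule, ← hrange, range_le_iff_comap, h]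

end Lie

theorem tensorProduct_decomposition_boxtimes_general
    {L₁ L₂ : Type*} [LieRing L₁] [LieAlgebra ℂ L₁] [LieRing L₂] [LieAlgebra ℂ L₂]
    {M₁ M₂ : Type*}
    [AddCommGroup M₁] [Module ℂ M₁] [LieRingModule L₁ M₁] [LieModule ℂ L₁ M₁]
    [FiniteDimensional ℂ M₁]
    [AddCommGroup M₂] [Module ℂ M₂] [LieRingModule L₂ M₂] [LieModule ℂ L₂ M₂]
    [FiniteDimensional ℂ M₂]
    [LieRingModule (L₁ × L₂) (M₁ ⊗[ℂ] M₂)]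
    (haction : ∀ (x₁ : L₁) (x₂ : L₂) (m : M₁) (n : M₂),
      ⁅((x₁, x₂) : L₁ × L₂), m ⊗ₜ[ℂ] n⁆ = ⁅x₁, m⁆ ⊗ₜ[ℂ] n + m ⊗ₜ[ℂ] ⁅x₂, n⁆)
    (n₁ n₂ : ℕ)
    (W : Fin n₁ → LieSubmodule ℂ L₁ M₁) (U : Fin n₂ → LieSubmodule ℂ L₂ M₂)
    (hWind : ∀ j, Disjoint (W j) (⨆ j' ≠ j, W j')) (hWsup : (⨆ j, W j) = ⊤)
    (hWirr : ∀ j, W j ≠ ⊥ ∧ ∀ W' ≤ W j, W' = ⊥ ∨ W' = W j)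
    (hUind : ∀ l, Disjoint (U l) (⨆ l' ≠ l, U l')) (hUsup : (⨆ l, U l) = ⊤)
    (hUirr : ∀ l, U l ≠ ⊥ ∧ ∀ U' ≤ U l, U' = ⊥ ∨ U' = U l) :
    ∃ T : Fin n₁ → Fin n₂ → LieSubmodule ℂ (L₁ × L₂) (M₁ ⊗[ℂ] M₂),
      (∀ j l, (T j l).toSubmodule
        = Submodule.map₂ (TensorProduct.mk ℂ M₁ M₂) (W j).toSubmodule (U l).toSubmodule) ∧
      (∀ p : Fin n₁ × Fin n₂, Disjoint (T p.1 p.2) (⨆ q ≠ p, T q.1 q.2)) ∧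
      (⨆ p : Fin n₁ × Fin n₂, T p.1 p.2) = ⊤ ∧
      (∀ j l, T j l ≠ ⊥ ∧ ∀ T' ≤ T j l, T' = ⊥ ∨ T' = T j l) := by
  have hWint := LieSubmodule.isInternal_toSubmodule hWind hWsup
  have hUint := LieSubmodule.isInternal_toSubmodule hUind hUsup
  have hind := hWint.iSupIndep_map₂_mk hUint
  have hsup := Submodule.iSup_map₂_mk_eq_top hWint.submodule_iSup_eq_top
    hUint.submodule_iSup_eq_top
  refine ⟨fun j l => LieSubmodule.boxtimes haction (W j) (U l),
    fun j l => LieSubmodule.boxtimes_toSubmodule haction (W j) (U l),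
    LieSubmodule.iSupIndep_toSubmodule.mp hind, ?_, fun j l => ?_⟩
  · rwa [← LieSubmodule.toSubmodule_inj, LieSubmodule.iSup_toSubmodule,
      LieSubmodule.top_toSubmodule]
  · exact isAtom_iff_ne_bot_and_forall_le.mp <| LieSubmodule.isAtom_boxtimes haction
      (isAtom_iff_ne_bot_and_forall_le.mpr (hWirr j))
      (isAtom_iff_ne_bot_and_forall_le.mpr (hUirr l))

/-- Let `M₁` be a finite-dimensional complex `L₁`-module and `M₂` a
finite-dimensional complex `L₂`-module; endow `M₁ ⊗ M₂` with the `L₁ × L₂`-module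
structure determined by `(x₁, x₂) • (m ⊗ n) = ⁅x₁, m⁆ ⊗ n + m ⊗ ⁅x₂, n⁆`. If `M₁` is the
internal direct sum of irreducible `L₁`-submodules `W j` and `M₂` is the internal direct
sum of irreducible `L₂`-submodules `U l`, then `M₁ ⊗ M₂` is the internal direct sum of the
subspaces `W j ⊗ U l`, each of which is an irreducible `L₁ × L₂`-submodule. -/
theorem tensorProduct_decomposition_boxtimes
    {L₁ L₂ : Type*} [LieRing L₁] [LieAlgebra ℂ L₁] [LieRing L₂] [LieAlgebra ℂ L₂]
    {M₁ M₂ : Type*}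
    [AddCommGroup M₁] [Module ℂ M₁] [LieRingModule L₁ M₁] [LieModule ℂ L₁ M₁]
    [FiniteDimensional ℂ M₁]
    [AddCommGroup M₂] [Module ℂ M₂] [LieRingModule L₂ M₂] [LieModule ℂ L₂ M₂]
    [FiniteDimensional ℂ M₂]
    [LieRingModule (L₁ × L₂) (M₁ ⊗[ℂ] M₂)] [LieModule ℂ (L₁ × L₂) (M₁ ⊗[ℂ] M₂)]
    (haction : ∀ (x₁ : L₁) (x₂ : L₂) (m : M₁) (n : M₂),
      ⁅((x₁, x₂) : L₁ × L₂), m ⊗ₜ[ℂ] n⁆ = ⁅x₁, m⁆ ⊗ₜ[ℂ] n + m ⊗ₜ[ℂ] ⁅x₂, n⁆)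
    (n₁ n₂ : ℕ)
    (W : Fin n₁ → LieSubmodule ℂ L₁ M₁) (U : Fin n₂ → LieSubmodule ℂ L₂ M₂)
    (hWind : ∀ j, Disjoint (W j) (⨆ j' ≠ j, W j')) (hWsup : (⨆ j, W j) = ⊤)
    (hWirr : ∀ j, W j ≠ ⊥ ∧ ∀ W' ≤ W j, W' = ⊥ ∨ W' = W j)
    (hUind : ∀ l, Disjoint (U l) (⨆ l' ≠ l, U l')) (hUsup : (⨆ l, U l) = ⊤)
    (hUirr : ∀ l, U l ≠ ⊥ ∧ ∀ U' ≤ U l, U' = ⊥ ∨ U' = U l) :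
    ∃ T : Fin n₁ → Fin n₂ → LieSubmodule ℂ (L₁ × L₂) (M₁ ⊗[ℂ] M₂),
      (∀ j l, (T j l).toSubmodule
        = Submodule.map₂ (TensorProduct.mk ℂ M₁ M₂) (W j).toSubmodule (U l).toSubmodule) ∧
      (∀ p : Fin n₁ × Fin n₂, Disjoint (T p.1 p.2) (⨆ q ≠ p, T q.1 q.2)) ∧
      (⨆ p : Fin n₁ × Fin n₂, T p.1 p.2) = ⊤ ∧
      (∀ j l, T j l ≠ ⊥ ∧ ∀ T' ≤ T j l, T' = ⊥ ∨ T' = T j l) :=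
  tensorProduct_decomposition_boxtimes_general haction n₁ n₂ W U hWind hWsup hWirr hUind hUsup hUirr
end

section
/- Let L be a Lie algebra over ℂ and M a finite-dimensional complex L-module such that every L-submodule of M admits a complementary L-submodule (complete reducibility). Let h be an L-invariant Hermitian sesquilinear form on M that is nondegenerate on M. Then M admits an internal direct sum decomposition M = N₁ ⊕ … ⊕ N_r into L-submodules that are pairwise orthogonal with respect to h, such that the restriction of h to each N_i is nondegenerate and each N_i is either an irreducible L-submodule or the internal direct sum of two irreducible L-submodules each of which is totally isotropic for h. -/
/-!
Peel off nondegenerate blocks one at a time. An irreducible submodule `A` of a nondegenerate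
submodule `U` meets its orthogonal either trivially (then `A` is a nondegenerate block) or in all
of `A` (then `A` is totally isotropic). In the isotropic case `U ⊄ Aᗮ` since `U` is
nondegenerate, so complete reducibility gives an irreducible `C ≤ U` with `C ∩ Aᗮ = 0`; then `C`
is itself a nondegenerate block, or it is totally isotropic and `A ⊕ C` is one. For a
nondegenerate block `P ≤ U` in finite dimension, `U = P ⊕ (U ∩ Pᗮ)` with `U ∩ Pᗮ` again
nondegenerate and smaller, so one inducts.
-/

open Module

theorem iSup_fin_cons {α : Type*} [CompleteLattice α] {n : ℕ} (a : α) (f : Fin n → α) :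
    ⨆ i, (Fin.cons a f : Fin (n + 1) → α) i = a ⊔ ⨆ i, f i :=
  le_antisymm
    (iSup_le <| Fin.cases le_sup_left fun i => le_sup_of_le_right (le_iSup f i))
    (sup_le (le_iSup_of_le 0 le_rfl) (iSup_le fun i => le_iSup_of_le i.succ le_rfl))

namespace Submodule

theorem isCompl_orthogonalBilin_of_disjoint {K V : Type*} [Field K] [AddCommGroup V]
    [Module K V] [FiniteDimensional K V] {J : K →+* K} (B : V →ₛₗ[J] V →ₗ[K] K)
    {P : Submodule K V} (hP : Disjoint P (P.orthogonalBilin B)) :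
    IsCompl P (P.orthogonalBilin B) := by
  let b := Module.finBasis K P
  let coords : V →ₗ[K] Fin (finrank K P) → K := LinearMap.pi fun i => B (b i)
  have hker : LinearMap.ker coords = P.orthogonalBilin B := by
    ext v
    refine ⟨fun hv x hx => ?_, fun hv => funext fun i => hv _ (b i).2⟩
    have : (B.flip v).comp P.subtype = 0 := b.ext fun i => congrFun hv i
    exact LinearMap.congr_fun this ⟨x, hx⟩
  have hrank : finrank K V ≤ finrank K P + finrank K (P.orthogonalBilin B) := by
    rw [← hker, ← LinearMap.finrank_range_add_finrank_ker coords]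
    gcongr
    exact (Submodule.finrank_le _).trans (Module.finrank_fin_fun K).le
  have hsup := Submodule.finrank_sup_add_finrank_inf_eq P (P.orthogonalBilin B)
  rw [disjoint_iff.1 hP, finrank_bot] at hsup
  exact ⟨hP, codisjoint_iff.2 <| Submodule.eq_top_of_finrank_eq <|
    le_antisymm (Submodule.finrank_le _) (by omega)⟩

end Submodule

namespace LieSubmodule

section CommRing

variable {R L M : Type*} [CommRing R] [LieRing L] [AddCommGroup M] [Module R M]
  [LieRingModule L M] {I : R →+* R} {B : M →ₛₗ[I] M →ₗ[R] R}
  (hB : ∀ (x : L) (v w : M), B ⁅x, v⁆ w + B v ⁅x, w⁆ = 0)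

def orthogonal (N : LieSubmodule R L M) : LieSubmodule R L M where
  toSubmodule := (N : Submodule R M).orthogonalBilin B
  lie_mem {x w} hw v hv := by
    simpa [hw _ (N.lie_mem hv)] using hB x v w

variable {hB}

@[simp]
theorem orthogonal_toSubmodule (N : LieSubmodule R L M) :
    (N.orthogonal hB : Submodule R M) = (N : Submodule R M).orthogonalBilin B :=
  rfl

theorem le_orthogonal_comm (hrefl : B.IsRefl) {N N' : LieSubmodule R L M} :
    N ≤ N'.orthogonal hB ↔ N' ≤ N.orthogonal hB :=
  ⟨fun h _ hv _ hw => hrefl _ _ (h hw _ hv), fun h _ hv _ hw => hrefl _ _ (h hw _ hv)⟩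

theorem orthogonal_sup (N N' : LieSubmodule R L M) :
    (N ⊔ N').orthogonal hB = N.orthogonal hB ⊓ N'.orthogonal hB := by
  ext w
  refine ⟨fun h => ⟨fun v hv => h v (mem_sup_left hv), fun v hv => h v (mem_sup_right hv)⟩, ?_⟩
  rintro ⟨h, h'⟩ v hv
  obtain ⟨a, ha, c, hc, rfl⟩ := (mem_sup _ _ _).1 hv
  rw [map_add, LinearMap.add_apply, h a ha, h' c hc, add_zero]

theorem disjoint_orthogonal_iff (hrefl : B.IsRefl) {N : LieSubmodule R L M} :
    Disjoint N (N.orthogonal hB) ↔ ∀ v ∈ N, (∀ w ∈ N, B v w = 0) → v = 0 := by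
  rw [← disjoint_toSubmodule, Submodule.disjoint_def]
  exact forall₂_congr fun v _ => imp_congr_left <| forall₂_congr fun w _ => hrefl.eq_iff

theorem disjoint_sup_orthogonal {A C : LieSubmodule R L M} (hA : A ≤ A.orthogonal hB)
    (hC : C ≤ C.orthogonal hB) (hAC : Disjoint A (C.orthogonal hB))
    (hCA : Disjoint C (A.orthogonal hB)) :
    Disjoint (A ⊔ C) ((A ⊔ C).orthogonal hB) := by
  rw [orthogonal_sup, ← disjoint_toSubmodule, Submodule.disjoint_def]
  intro v hv hv'
  obtain ⟨a, ha, c, hc, rfl⟩ := (mem_sup _ _ _).1 hv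
  obtain ⟨hvA, hvC⟩ := (mem_inf _ _ _).1 hv'
  have ha0 : a = 0 := by
    rw [← disjoint_toSubmodule, Submodule.disjoint_def] at hAC
    exact hAC a ha (add_sub_cancel_right a c ▸ sub_mem hvC (hC hc))
  have hc0 : c = 0 := by
    rw [← disjoint_toSubmodule, Submodule.disjoint_def] at hCA
    exact hCA c hc (add_sub_cancel_left a c ▸ sub_mem hvA (hA ha))
  rw [ha0, hc0, add_zero]

variable (hB) in
def IsSumOfIsotropicAtoms (N : LieSubmodule R L M) : Prop :=
  ∃ A C : LieSubmodule R L M, IsAtom A ∧ IsAtom C ∧ A ≤ A.orthogonal hB ∧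
    C ≤ C.orthogonal hB ∧ A ⊓ C = ⊥ ∧ A ⊔ C = N

variable (hB) in
structure IsOrthogonalDecomposition (U : LieSubmodule R L M) {r : ℕ}
    (N : Fin r → LieSubmodule R L M) : Prop where
  iSup_eq : ⨆ i, N i = U
  pairwise_le_orthogonal : Pairwise fun i j => N j ≤ (N i).orthogonal hB
  disjoint_orthogonal : ∀ i, Disjoint (N i) ((N i).orthogonal hB)
  isAtom_or_isSumOfIsotropicAtoms : ∀ i, IsAtom (N i) ∨ IsSumOfIsotropicAtoms hB (N i)

theorem isOrthogonalDecomposition_bot :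
    IsOrthogonalDecomposition hB ⊥ (Fin.elim0 : Fin 0 → LieSubmodule R L M) :=
  ⟨iSup_of_empty _, fun i => i.elim0, fun i => i.elim0, fun i => i.elim0⟩

theorem IsOrthogonalDecomposition.cons (hrefl : B.IsRefl) {r : ℕ} {X P : LieSubmodule R L M}
    {N : Fin r → LieSubmodule R L M} (hN : IsOrthogonalDecomposition hB X N)
    (hP : Disjoint P (P.orthogonal hB)) (hPb : IsAtom P ∨ IsSumOfIsotropicAtoms hB P)
    (hXP : X ≤ P.orthogonal hB) :
    IsOrthogonalDecomposition hB (P ⊔ X) (Fin.cons P N : Fin (r + 1) → _) where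
  iSup_eq := by rw [iSup_fin_cons, hN.iSup_eq]
  pairwise_le_orthogonal i j hij := by
    have hNP (k : Fin r) : N k ≤ P.orthogonal hB := hN.iSup_eq ▸ le_iSup N k |>.trans hXP
    cases i using Fin.cases <;> cases j using Fin.cases
    · exact absurd rfl hij
    · exact hNP _
    · exact (le_orthogonal_comm hrefl).1 (hNP _)
    · exact hN.pairwise_le_orthogonal fun h => hij (congrArg Fin.succ h)
  disjoint_orthogonal := Fin.cases hP hN.disjoint_orthogonal
  isAtom_or_isSumOfIsotropicAtoms := Fin.cases hPb hN.isAtom_or_isSumOfIsotropicAtoms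

variable [ComplementedLattice (LieSubmodule R L M)]

theorem exists_atom_le_disjoint_orthogonal (hrefl : B.IsRefl) {U A : LieSubmodule R L M}
    (hU : Disjoint U (U.orthogonal hB)) (hA : A ≠ ⊥) (hAU : A ≤ U) :
    ∃ C, IsAtom C ∧ C ≤ U ∧ Disjoint C (A.orthogonal hB) := by
  by_contra! h
  have hUA : U ≤ A.orthogonal hB := by
    rw [← sSup_atoms_le_eq U]
    exact sSup_le fun C ⟨hC, hCU⟩ => hC.not_disjoint_iff_le.1 (h C hC hCU)
  exact hA <| (hU.mono_left hAU).eq_bot_of_le ((le_orthogonal_comm hrefl).1 hUA)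

theorem exists_nondegenerate_block (hrefl : B.IsRefl) {U : LieSubmodule R L M}
    (hU : Disjoint U (U.orthogonal hB)) (hU0 : U ≠ ⊥) :
    ∃ P ≤ U, P ≠ ⊥ ∧ Disjoint P (P.orthogonal hB) ∧
      (IsAtom P ∨ IsSumOfIsotropicAtoms hB P) := by
  obtain ⟨A, hA, hAU⟩ := (eq_bot_or_exists_atom_le U).resolve_left hU0
  by_cases hAnd : Disjoint A (A.orthogonal hB)
  · exact ⟨A, hAU, hA.ne_bot, hAnd, .inl hA⟩
  have hAiso : A ≤ A.orthogonal hB := hA.not_disjoint_iff_le.1 hAnd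
  obtain ⟨C, hC, hCU, hCA⟩ := exists_atom_le_disjoint_orthogonal hrefl hU hA.ne_bot hAU
  by_cases hCnd : Disjoint C (C.orthogonal hB)
  · exact ⟨C, hCU, hC.ne_bot, hCnd, .inl hC⟩
  have hCiso : C ≤ C.orthogonal hB := hC.not_disjoint_iff_le.1 hCnd
  have hAC : Disjoint A (C.orthogonal hB) := hA.not_le_iff_disjoint.1 fun h =>
    hC.ne_bot (hCA.eq_bot_of_le ((le_orthogonal_comm hrefl).1 h))
  exact ⟨A ⊔ C, sup_le hAU hCU, ne_bot_of_le_ne_bot hA.ne_bot le_sup_left,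
    disjoint_sup_orthogonal hAiso hCiso hAC hCA,
    .inr ⟨A, C, hA, hC, hAiso, hCiso, disjoint_iff.1 (hAC.mono_right hCiso), rfl⟩⟩

end CommRing

section Field

variable {K L M : Type*} [Field K] [LieRing L] [AddCommGroup M] [Module K M]
  [LieRingModule L M] [FiniteDimensional K M] {J : K →+* K} {B : M →ₛₗ[J] M →ₗ[K] K}
  {hB : ∀ (x : L) (v w : M), B ⁅x, v⁆ w + B v ⁅x, w⁆ = 0}

theorem sup_inf_orthogonal_eq {P U : LieSubmodule K L M} (hP : Disjoint P (P.orthogonal hB))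
    (hPU : P ≤ U) : P ⊔ U ⊓ P.orthogonal hB = U := by
  have hcompl : IsCompl P (P.orthogonal hB) := by
    rw [← isCompl_toSubmodule, orthogonal_toSubmodule]
    exact Submodule.isCompl_orthogonalBilin_of_disjoint B (disjoint_toSubmodule.2 hP)
  rw [inf_comm, ← sup_inf_assoc_of_le _ hPU, hcompl.sup_eq_top, top_inf_eq]

theorem disjoint_inf_orthogonal {P U : LieSubmodule K L M} (hU : Disjoint U (U.orthogonal hB))
    (hP : Disjoint P (P.orthogonal hB)) (hPU : P ≤ U) :
    Disjoint (U ⊓ P.orthogonal hB) ((U ⊓ P.orthogonal hB).orthogonal hB) := by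
  set X := U ⊓ P.orthogonal hB
  have hXU : X ⊓ X.orthogonal hB ≤ U ⊓ U.orthogonal hB :=
    calc X ⊓ X.orthogonal hB ≤ U ⊓ (P.orthogonal hB ⊓ X.orthogonal hB) :=
          le_inf (inf_le_left.trans inf_le_left) (inf_le_inf_right _ inf_le_right)
      _ = U ⊓ U.orthogonal hB := by rw [← orthogonal_sup, sup_inf_orthogonal_eq hP hPU]
  exact disjoint_iff_inf_le.2 (hXU.trans hU.le_bot)

theorem exists_isOrthogonalDecomposition [ComplementedLattice (LieSubmodule K L M)]
    (hrefl : B.IsRefl) (U : LieSubmodule K L M) (hU : Disjoint U (U.orthogonal hB)) :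
    ∃ (r : ℕ) (N : Fin r → LieSubmodule K L M), IsOrthogonalDecomposition hB U N := by
  have := wellFoundedLT_of_isArtinian K L M
  induction U using WellFoundedLT.induction with | ind U ih
  by_cases hU0 : U = ⊥
  · exact hU0 ▸ ⟨0, _, isOrthogonalDecomposition_bot⟩
  obtain ⟨P, hPU, hP0, hP, hPb⟩ := exists_nondegenerate_block hrefl hU hU0
  have hlt : U ⊓ P.orthogonal hB < U := inf_le_left.lt_of_ne fun h =>
    hP0 (hP.eq_bot_of_le (hPU.trans (inf_eq_left.1 h)))
  obtain ⟨r, N, hN⟩ := ih _ hlt (disjoint_inf_orthogonal hU hP hPU)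
  exact ⟨r + 1, _, sup_inf_orthogonal_eq hP hPU ▸ hN.cons hrefl hP hPb inf_le_right⟩

end Field

end LieSubmodule

theorem orthogonal_decomposition_of_completely_reducible_general
    {L : Type*} [LieRing L]
    {M : Type*} [AddCommGroup M] [Module ℂ M] [LieRingModule L M]
    [FiniteDimensional ℂ M]
    (hss : ∀ W : LieSubmodule ℂ L M, ∃ W' : LieSubmodule ℂ L M, IsCompl W W')
    (h : M →ₗ⋆[ℂ] M →ₗ[ℂ] ℂ)
    (hHerm : ∀ v w : M, h w v = (starRingEnd ℂ) (h v w))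
    (hInv : ∀ (x : L) (v w : M), h ⁅x, v⁆ w + h v ⁅x, w⁆ = 0)
    (hNondeg : ∀ v : M, (∀ w : M, h v w = 0) → v = 0) :
    ∃ (r : ℕ) (N : Fin r → LieSubmodule ℂ L M),
      (∀ i, Disjoint (N i) (⨆ j ≠ i, N j)) ∧
      (⨆ i, N i) = ⊤ ∧
      (∀ i j, i ≠ j → ∀ v ∈ N i, ∀ w ∈ N j, h v w = 0) ∧
      (∀ i, ∀ v ∈ N i, (∀ w ∈ N i, h v w = 0) → v = 0) ∧
      (∀ i,
        (N i ≠ ⊥ ∧ ∀ W ≤ N i, W = ⊥ ∨ W = N i) ∨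
        ∃ A B : LieSubmodule ℂ L M,
          (A ≠ ⊥ ∧ ∀ W ≤ A, W = ⊥ ∨ W = A) ∧
          (B ≠ ⊥ ∧ ∀ W ≤ B, W = ⊥ ∨ W = B) ∧
          (∀ v ∈ A, ∀ w ∈ A, h v w = 0) ∧
          (∀ v ∈ B, ∀ w ∈ B, h v w = 0) ∧
          A ⊓ B = ⊥ ∧ A ⊔ B = N i) := by
  have hrefl : h.IsRefl := (LinearMap.isSymm_def.2 fun v w => (hHerm v w).symm).isRefl
  have : ComplementedLattice (LieSubmodule ℂ L M) := ⟨hss⟩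
  have irreducible_of_isAtom (A : LieSubmodule ℂ L M) (hA : IsAtom A) :
      A ≠ ⊥ ∧ ∀ W ≤ A, W = ⊥ ∨ W = A :=
    ⟨hA.ne_bot, fun _ => hA.le_iff.1⟩
  obtain ⟨r, N, hN⟩ := LieSubmodule.exists_isOrthogonalDecomposition (hB := hInv) hrefl ⊤
    ((LieSubmodule.disjoint_orthogonal_iff hrefl).2 fun v _ hv => hNondeg v fun w => hv w trivial)
  refine ⟨r, N, fun i => ?_, hN.iSup_eq, fun i j hij v hv w hw =>
    hN.pairwise_le_orthogonal hij hw v hv,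
    fun i => (LieSubmodule.disjoint_orthogonal_iff hrefl).1 (hN.disjoint_orthogonal i),
    fun i => ?_⟩
  · exact (hN.disjoint_orthogonal i).mono_right
      (iSup₂_le fun j hj => hN.pairwise_le_orthogonal (Ne.symm hj))
  · refine (hN.isAtom_or_isSumOfIsotropicAtoms i).imp (irreducible_of_isAtom _) ?_
    rintro ⟨A, C, hA, hC, hAiso, hCiso, hinf, hsup⟩
    exact ⟨A, C, irreducible_of_isAtom A hA, irreducible_of_isAtom C hC,
      fun v hv w hw => hAiso hw v hv, fun v hv w hw => hCiso hw v hv, hinf, hsup⟩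

/-- Let `L` be a Lie algebra over `ℂ` and `M` a finite-dimensional
complex `L`-module such that every `L`-submodule of `M` admits a complementary
`L`-submodule (complete reducibility). Let `h` be an `L`-invariant Hermitian sesquilinear
form on `M` that is nondegenerate on `M`. Then `M` admits an internal direct sum
decomposition `M = N 0 ⊕ … ⊕ N (r-1)` into `L`-submodules which are pairwise orthogonal
with respect to `h`, such that the restriction of `h` to each `N i` is nondegenerate, and
each `N i` is either an irreducible `L`-submodule or the internal direct sum of two
irreducible `L`-submodules each of which is totally isotropic for `h`. -/
theorem orthogonal_decomposition_of_completely_reducible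
    {L : Type*} [LieRing L] [LieAlgebra ℂ L]
    {M : Type*} [AddCommGroup M] [Module ℂ M] [LieRingModule L M] [LieModule ℂ L M]
    [FiniteDimensional ℂ M]
    (hss : ∀ W : LieSubmodule ℂ L M, ∃ W' : LieSubmodule ℂ L M, IsCompl W W')
    (h : M →ₗ⋆[ℂ] M →ₗ[ℂ] ℂ)
    (hHerm : ∀ v w : M, h w v = (starRingEnd ℂ) (h v w))
    (hInv : ∀ (x : L) (v w : M), h ⁅x, v⁆ w + h v ⁅x, w⁆ = 0)
    (hNondeg : ∀ v : M, (∀ w : M, h v w = 0) → v = 0) :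
    ∃ (r : ℕ) (N : Fin r → LieSubmodule ℂ L M),
      (∀ i, Disjoint (N i) (⨆ j ≠ i, N j)) ∧
      (⨆ i, N i) = ⊤ ∧
      (∀ i j, i ≠ j → ∀ v ∈ N i, ∀ w ∈ N j, h v w = 0) ∧
      (∀ i, ∀ v ∈ N i, (∀ w ∈ N i, h v w = 0) → v = 0) ∧
      (∀ i,
        (N i ≠ ⊥ ∧ ∀ W ≤ N i, W = ⊥ ∨ W = N i) ∨
        ∃ A B : LieSubmodule ℂ L M,
          (A ≠ ⊥ ∧ ∀ W ≤ A, W = ⊥ ∨ W = A) ∧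
          (B ≠ ⊥ ∧ ∀ W ≤ B, W = ⊥ ∨ W = B) ∧
          (∀ v ∈ A, ∀ w ∈ A, h v w = 0) ∧
          (∀ v ∈ B, ∀ w ∈ B, h v w = 0) ∧
          A ⊓ B = ⊥ ∧ A ⊔ B = N i) :=
  orthogonal_decomposition_of_completely_reducible_general hss h hHerm hInv hNondeg
end
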